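/- Gumbel-max construction of categorical sampling: if $u_1,\dots,u_N$ are i.i.d. Uniform$(0,1)$, $g_j = -\log(-\log u_j)$ are the corresponding standard Gumbel variables, and $w_1,\dots,w_N$ are positive weights summing to 1, then $\arg\max_j (\log w_j + g_j)$ is distributed as $\mathrm{Categorical}(w_1,\dots,w_N)$, i.e., $\mathbb{P}(\arg\max_j (\log w_j + g_j) = k) = w_k$ for each $k$. -/

import Mathlib

open MeasureTheory

/-- pointwise equivalence of the comparison events -/
lemma gumbel_pointwise {wj wk a b : ℝ} (hwj : 0 < wj) (hwk : 0 < wk)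
    (ha : a ∈ Set.Ioo (0:ℝ) 1) (hb : b ∈ Set.Ioo (0:ℝ) 1) :
    (Real.log wj + -Real.log (-Real.log a) < Real.log wk + -Real.log (-Real.log b)
      ↔ a < b ^ (wj / wk)) := by
  obtain ⟨ha0, ha1⟩ := ha
  obtain ⟨hb0, hb1⟩ := hb
  have hA : 0 < -Real.log a := by nlinarith [Real.log_neg ha0 ha1]
  have hB : 0 < -Real.log b := by nlinarith [Real.log_neg hb0 hb1]
  have h1 : (Real.log wj + -Real.log (-Real.log a) < Real.log wk + -Real.log (-Real.log b))
      ↔ Real.log (wj * (-Real.log b)) < Real.log (wk * (-Real.log a)) := by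
    rw [Real.log_mul (ne_of_gt hwj) (ne_of_gt hB), Real.log_mul (ne_of_gt hwk) (ne_of_gt hA)]
    constructor <;> intro <;> linarith
  rw [h1, Real.log_lt_log_iff (by positivity) (by positivity)]
  have h2 : a < b ^ (wj / wk) ↔ Real.log a < Real.log (b ^ (wj / wk)) :=
    (Real.log_lt_log_iff ha0 (Real.rpow_pos_of_pos hb0 _)).symm
  rw [h2, Real.log_rpow hb0, div_mul_eq_mul_div, lt_div_iff₀ hwk]
  constructor <;> intro h <;> nlinarith

/-- **Gumbel-max construction of categorical sampling.**
If `u 1, …, u N` are i.i.d. `Uniform(0,1)`, `g j = -log(-log u j)` are the corresponding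
standard Gumbel variables, and `w` are positive weights summing to 1, then
`argmax_j (log w j + g j)` is distributed as `Categorical(w)`: for each `k`,
`P(log w k + g k > log w j + g j for all j ≠ k) = w k` (the argmax being a.s. unique). -/
theorem gumbel_max_categorical
    {N : ℕ} (hN : 0 < N)
    (w : Fin N → ℝ) (hw_pos : ∀ j, 0 < w j) (hw_sum : ∑ j, w j = 1)
    {Ω : Type*} [MeasurableSpace Ω] (P : Measure Ω) [IsProbabilityMeasure P]
    (u : Fin N → Ω → ℝ) (hu_meas : ∀ j, Measurable (u j))
    -- `u j` are uniform on `(0,1)`: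
    (hu_law : ∀ j, P.map (u j) = volume.restrict (Set.Ioo (0 : ℝ) 1))
    -- and independent:
    (hu_indep : ProbabilityTheory.iIndepFun u P)
    (g : Fin N → Ω → ℝ)
    (hg : ∀ j ω, g j ω = -Real.log (-Real.log (u j ω))) :
    ∀ k : Fin N,
      P {ω | ∀ j, j ≠ k → Real.log (w j) + g j ω < Real.log (w k) + g k ω}
        = ENNReal.ofReal (w k) := by
  obtain ⟨n, rfl⟩ : ∃ n, N = n + 1 := ⟨N - 1, (Nat.succ_pred_eq_of_pos hN).symm⟩
  intro k
  -- the uniform measure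
  set μ : Fin (n+1) → Measure ℝ := fun _ => volume.restrict (Set.Ioo (0:ℝ) 1) with hμ
  have hprob : ∀ j, IsProbabilityMeasure (μ j) := fun j =>
    ⟨by simp [hμ, Real.volume_Ioo]⟩
  haveI := hprob
  -- Step 1: a.e. each `u j` lies in (0,1)
  have hae : ∀ᵐ ω ∂P, ∀ j, u j ω ∈ Set.Ioo (0:ℝ) 1 := by
    rw [MeasureTheory.ae_all_iff]
    intro j
    have h0 : P.map (u j) (Set.Ioo (0:ℝ) 1)ᶜ = 0 := by
      rw [hu_law j, Measure.restrict_apply measurableSet_Ioo.compl]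
      simp
    rw [Measure.map_apply (hu_meas j) measurableSet_Ioo.compl] at h0
    exact (MeasureTheory.ae_iff).2 h0
  -- Step 2: rewrite the event a.e. as a rectangle-product-type event
  have hP : P {ω | ∀ j, j ≠ k → Real.log (w j) + g j ω < Real.log (w k) + g k ω}
      = P {ω | ∀ j, j ≠ k → u j ω < (u k ω) ^ (w j / w k)} := by
    apply measure_congr
    rw [Filter.eventuallyEq_set]
    filter_upwards [hae] with ω hω
    constructor <;> intro h j hj
    · exact (gumbel_pointwise (hw_pos j) (hw_pos k) (hω j) (hω k)).1
        (by simpa [hg] using h j hj)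
    · have := (gumbel_pointwise (hw_pos j) (hw_pos k) (hω j) (hω k)).2 (h j hj)
      simpa [hg] using this
  rw [hP]
  -- Step 3: the joint law is the product measure
  have hFmeas : Measurable (fun ω (j : Fin (n+1)) => u j ω) :=
    measurable_pi_iff.2 hu_meas
  have hmap : P.map (fun ω (j : Fin (n+1)) => u j ω) = Measure.pi μ := by
    symm
    apply Measure.pi_eq
    intro s hs
    rw [Measure.map_apply hFmeas (MeasurableSet.univ_pi hs)]
    have hpre : (fun ω (j : Fin (n+1)) => u j ω) ⁻¹' (Set.pi Set.univ s)
        = ⋂ j, u j ⁻¹' s j := by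
      ext ω; simp [Set.mem_pi]
    rw [hpre, hu_indep.meas_iInter (fun j => ⟨s j, hs j, rfl⟩)]
    refine Finset.prod_congr rfl fun j _ => ?_
    simp only [hμ]
    rw [← hu_law j, Measure.map_apply (hu_meas j) (hs j)]
  -- the target set in product space
  set S : Set (Fin (n+1) → ℝ) := {x | ∀ j, j ≠ k → x j < x k ^ (w j / w k)} with hS
  have hSmeas : MeasurableSet S := by
    have : S = ⋂ j, ⋂ (_ : j ≠ k), {x : Fin (n+1) → ℝ | x j < x k ^ (w j / w k)} := by
      ext x; simp [hS]
    rw [this]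
    refine MeasurableSet.iInter fun j => MeasurableSet.iInter fun hj => ?_
    exact measurableSet_lt (measurable_pi_apply j)
      ((Real.continuous_rpow_const (div_pos (hw_pos j) (hw_pos k)).le).measurable.comp (measurable_pi_apply k))
  have hPS : P {ω | ∀ j, j ≠ k → u j ω < (u k ω) ^ (w j / w k)} = Measure.pi μ S := by
    rw [← hmap, Measure.map_apply hFmeas hSmeas]
    rfl
  rw [hPS]
  -- Step 4: compute via Fubini, splitting off coordinate k
  set T : Set (ℝ × (Fin n → ℝ)) :=
    {p | ∀ j, p.2 j < p.1 ^ (w (k.succAbove j) / w k)} with hT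
  have hTmeas : MeasurableSet T := by
    have : T = ⋂ j, {p : ℝ × (Fin n → ℝ) | p.2 j < p.1 ^ (w (k.succAbove j) / w k)} := by
      ext p; simp [hT]
    rw [this]
    refine MeasurableSet.iInter fun j => ?_
    exact measurableSet_lt (measurable_snd.eval)
      ((Real.continuous_rpow_const (div_pos (hw_pos _) (hw_pos k)).le).measurable.comp measurable_fst)
  have hpre : (MeasurableEquiv.piFinSuccAbove (fun _ => ℝ) k) ⁻¹' T = S := by
    ext x
    simp only [hT, hS, Set.mem_preimage, Set.mem_setOf_eq,
      MeasurableEquiv.piFinSuccAbove_apply, Fin.insertNthEquiv, Equiv.coe_fn_symm_mk,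
      Fin.removeNth]
    constructor
    · intro h j hj
      obtain ⟨i, rfl⟩ := Fin.exists_succAbove_eq hj
      exact h i
    · intro h i
      exact h (k.succAbove i) (Fin.succAbove_ne k i)
  have hmp := measurePreserving_piFinSuccAbove μ k
  have hpi : Measure.pi μ S
      = ((μ k).prod (Measure.pi fun j => μ (k.succAbove j))) T := by
    rw [← hpre]
    exact hmp.measure_preimage hTmeas.nullMeasurableSet
  rw [hpi, Measure.prod_apply hTmeas]
  -- the exponent
  set a : ℝ := (1 - w k) / w k with ha
  have hsum : ∑ j : Fin n, w (k.succAbove j) / w k = a := by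
    rw [← Finset.sum_div, ha]
    congr 1
    have := Fin.sum_univ_succAbove w k
    rw [hw_sum] at this
    linarith
  have ha0 : 0 ≤ a := by
    rw [ha]
    have hwk1 : w k ≤ 1 := by
      rw [← hw_sum]
      exact Finset.single_le_sum (fun j _ => (hw_pos j).le) (Finset.mem_univ k)
    exact div_nonneg (by linarith) (hw_pos k).le
  -- inner measure computation
  have hinner : ∀ x ∈ Set.Ioo (0:ℝ) 1,
      (Measure.pi fun j => μ (k.succAbove j)) (Prod.mk x ⁻¹' T)
        = ENNReal.ofReal (x ^ a) := by
    intro x hx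
    have hxpre : (Prod.mk x ⁻¹' T)
        = Set.pi Set.univ (fun j => Set.Iio (x ^ (w (k.succAbove j) / w k))) := by
      ext y; simp [hT]
    rw [hxpre, Measure.pi_pi]
    have hfac : ∀ j : Fin n,
        μ (k.succAbove j) (Set.Iio (x ^ (w (k.succAbove j) / w k)))
          = ENNReal.ofReal (x ^ (w (k.succAbove j) / w k)) := by
      intro j
      set c : ℝ := x ^ (w (k.succAbove j) / w k) with hc
      have hc0 : 0 < c := Real.rpow_pos_of_pos hx.1 _
      have hc1 : c < 1 := Real.rpow_lt_one hx.1.le hx.2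
        (div_pos (hw_pos _) (hw_pos k))
      have : Set.Iio c ∩ Set.Ioo (0:ℝ) 1 = Set.Ioo 0 c := by
        ext y
        simp only [Set.mem_inter_iff, Set.mem_Iio, Set.mem_Ioo]
        constructor
        · rintro ⟨h1, h2, h3⟩; exact ⟨h2, h1⟩
        · rintro ⟨h1, h2⟩; exact ⟨h2, h1, h2.trans hc1⟩
      rw [hμ, Measure.restrict_apply measurableSet_Iio, this, Real.volume_Ioo]
      simp
    rw [Finset.prod_congr rfl (fun j _ => hfac j),
      ← ENNReal.ofReal_prod_of_nonneg
        (fun j _ => (Real.rpow_pos_of_pos hx.1 _).le),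
      ← Real.rpow_sum_of_pos hx.1, hsum]
  rw [MeasureTheory.setLIntegral_congr_fun measurableSet_Ioo
    hinner]
  -- Step 5: compute the integral ∫ x^a on (0,1)
  have hint : IntegrableOn (fun x : ℝ => x ^ a) (Set.Ioo 0 1) volume := by
    have := (intervalIntegral.intervalIntegrable_rpow (r := a) (a := 0) (b := 1) (μ := volume)
      (Or.inl ha0))
    rw [intervalIntegrable_iff_integrableOn_Ioc_of_le zero_le_one] at this
    exact this.mono_set Set.Ioo_subset_Ioc_self
  have hnn : 0 ≤ᵐ[volume.restrict (Set.Ioo (0:ℝ) 1)] fun x => x ^ a := by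
    filter_upwards [ae_restrict_mem measurableSet_Ioo] with x hx
    exact Real.rpow_nonneg hx.1.le a
  rw [← MeasureTheory.ofReal_integral_eq_lintegral_ofReal hint hnn]
  have hval : ∫ x in Set.Ioo (0:ℝ) 1, x ^ a = w k := by
    rw [← MeasureTheory.integral_Ioc_eq_integral_Ioo,
      ← intervalIntegral.integral_of_le zero_le_one,
      integral_rpow (Or.inl (by linarith : (-1:ℝ) < a))]
    rw [Real.one_rpow, Real.zero_rpow (by linarith : a + 1 ≠ 0)]
    rw [ha]
    have hwk := hw_pos k
    field_simp
    ring
  rw [hval]
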